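/- Minimizing ||I − G·L||_F over matrices G with fixed lower-triangular sparsity pattern S, where L is the Cholesky factor of SPD A, yields the first-order conditions [G·A]ᵢⱼ = Lᵢᵢ·δᵢⱼ for all (i,j) ∈ S, i.e., at a stationary point G of the objective restricted to pattern S, [G·A]ᵢⱼ = Lᵢᵢ when i = j and [G·A]ᵢⱼ = 0 when i ≠ j, for (i,j) ∈ S. -/

import Mathlib

open Matrix

lemma fsai_trace_std {n : ℕ} (X : Matrix (Fin n) (Fin n) ℝ) (i j : Fin n) :
    Matrix.trace (Matrix.single i j (1:ℝ) * X) = X j i := by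
  simp [Matrix.trace, Matrix.mul_apply, Matrix.single, Matrix.diag, ite_and,
    Finset.sum_ite_eq, Finset.sum_ite_eq']

lemma fsai_deriv {n : ℕ} (L G : Matrix (Fin n) (Fin n) ℝ) (i j : Fin n) :
    deriv (fun t : ℝ =>
        Matrix.trace ((1 - (G + t • Matrix.single i j (1 : ℝ)) * L) *
          (1 - (G + t • Matrix.single i j (1 : ℝ)) * L)ᵀ)) 0 =
      -2 * ((L - L * Lᵀ * Gᵀ) j i) := by
  set E := Matrix.single i j (1:ℝ)
  set M := (1 : Matrix (Fin n) (Fin n) ℝ) - G * L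
  set N := E * L
  have hfun : (fun t : ℝ =>
      Matrix.trace ((1 - (G + t • E) * L) * (1 - (G + t • E) * L)ᵀ)) =
      fun t : ℝ => Matrix.trace (M * Mᵀ)
        + t * (-(Matrix.trace (M * Nᵀ) + Matrix.trace (N * Mᵀ)))
        + t^2 * Matrix.trace (N * Nᵀ) := by
    funext t
    have h1 : (1 : Matrix (Fin n) (Fin n) ℝ) - (G + t • E) * L = M - t • N := by
      simp [M, N, add_mul, Matrix.smul_mul]
      abel
    rw [h1]
    simp [transpose_sub, transpose_smul, sub_mul, mul_sub, Matrix.smul_mul, Matrix.mul_smul,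
      trace_sub, trace_smul, smul_eq_mul]
    ring
  rw [hfun]
  have hd : HasDerivAt (fun t : ℝ => Matrix.trace (M * Mᵀ)
        + t * (-(Matrix.trace (M * Nᵀ) + Matrix.trace (N * Mᵀ)))
        + t^2 * Matrix.trace (N * Nᵀ))
      (-(Matrix.trace (M * Nᵀ) + Matrix.trace (N * Mᵀ))) 0 := by
    have h1 : HasDerivAt (fun t : ℝ => t * (-(Matrix.trace (M * Nᵀ) + Matrix.trace (N * Mᵀ))))
        (-(Matrix.trace (M * Nᵀ) + Matrix.trace (N * Mᵀ))) 0 := by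
      simpa using (hasDerivAt_id (0:ℝ)).mul_const (-(Matrix.trace (M * Nᵀ) + Matrix.trace (N * Mᵀ)))
    have h2 : HasDerivAt (fun t : ℝ => t^2 * Matrix.trace (N * Nᵀ)) 0 0 := by
      simpa using (hasDerivAt_pow 2 (0:ℝ)).mul_const (Matrix.trace (N * Nᵀ))
    simpa only [add_zero, Pi.add_def] using ((h1.const_add (Matrix.trace (M * Mᵀ))).add h2)
  rw [hd.deriv]
  -- trace (M * Nᵀ) = trace (N * Mᵀ)
  have hsym : Matrix.trace (M * Nᵀ) = Matrix.trace (N * Mᵀ) := by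
    rw [← Matrix.trace_transpose (M * Nᵀ), Matrix.transpose_mul, Matrix.transpose_transpose]
  have hval : Matrix.trace (N * Mᵀ) = (L - L * Lᵀ * Gᵀ) j i := by
    have : N * Mᵀ = E * (L * Mᵀ) := by simp only [N, Matrix.mul_assoc]
    rw [this, fsai_trace_std]
    have : L * Mᵀ = L - L * Lᵀ * Gᵀ := by
      simp [M, transpose_sub, transpose_mul, mul_sub, Matrix.mul_assoc]
    rw [this]
  rw [hsym, hval]; ring

/-- First-order (stationarity) conditions for minimizing `‖I − G·L‖_F²` over matrices `G`
supported on a fixed lower-triangular pattern `S` containing the diagonal, where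
`A = L·Lᵀ` is the Cholesky factorization: the directional derivatives of the objective
along all pattern entries vanish iff `[G·A]ᵢⱼ = 0` for `(i,j) ∈ S`, `i ≠ j`, and
`[G·A]ᵢᵢ = Lᵢᵢ`. -/
theorem fsai_stationarity_iff {n : ℕ} (A L G : Matrix (Fin n) (Fin n) ℝ)
    (hA : A.PosDef) (hChol : A = L * Lᵀ)
    (hLlow : ∀ i j : Fin n, i < j → L i j = 0) (hLdiag : ∀ i : Fin n, 0 < L i i)
    (S : Set (Fin n × Fin n)) (hSlow : ∀ p ∈ S, p.2 ≤ p.1) (hSdiag : ∀ i : Fin n, (i, i) ∈ S)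
    (hGsupp : ∀ i j : Fin n, (i, j) ∉ S → G i j = 0) :
    (∀ i j : Fin n, (i, j) ∈ S →
        deriv (fun t : ℝ =>
          Matrix.trace ((1 - (G + t • Matrix.single i j (1 : ℝ)) * L) *
            (1 - (G + t • Matrix.single i j (1 : ℝ)) * L)ᵀ)) 0 = 0) ↔
      ∀ i j : Fin n, (i, j) ∈ S → (G * A) i j = if i = j then L i i else 0 := by
  have hAsym : Aᵀ = A := by rw [hChol]; simp [transpose_mul]
  have key : ∀ i j : Fin n, (i, j) ∈ S →
      ((L - L * Lᵀ * Gᵀ) j i = 0 ↔ (G * A) i j = if i = j then L i i else 0) := by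
    intro i j hij
    have hji : j ≤ i := hSlow (i, j) hij
    have hL : L j i = if i = j then L i i else 0 := by
      rcases eq_or_lt_of_le hji with h | h
      · simp [h]
      · rw [hLlow j i h, if_neg (ne_of_gt h)]
    have hGA : (L * Lᵀ * Gᵀ) j i = (G * A) i j := by
      have h1 : (L * Lᵀ * Gᵀ)ᵀ = G * (L * Lᵀ) := by
        rw [Matrix.transpose_mul, Matrix.transpose_transpose, Matrix.transpose_mul,
          Matrix.transpose_transpose]
      calc (L * Lᵀ * Gᵀ) j i = ((L * Lᵀ * Gᵀ)ᵀ) i j := rfl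
        _ = (G * (L * Lᵀ)) i j := by rw [h1]
        _ = (G * A) i j := by rw [← hChol]
    simp only [Matrix.sub_apply, hL, hGA, sub_eq_zero]
    exact eq_comm
  constructor
  · intro h i j hij
    have := h i j hij
    rw [fsai_deriv] at this
    have h0 : (L - L * Lᵀ * Gᵀ) j i = 0 := by linarith
    exact (key i j hij).mp h0
  · intro h i j hij
    rw [fsai_deriv]
    have := (key i j hij).mpr (h i j hij)
    rw [this]; ring
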